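/- arXiv:1104.3349 — 3 statements merged into one kernel-verified Lean document; each statement's English description precedes it below -/
import Mathlib

section
/- Let C = [[D, E], [F, G]] be a block 2×2 matrix with D invertible p×p, and let Ŝ be any invertible q×q matrix. Define the preconditioner B = [[D, 0], [F, Ŝ]] · [[D⁻¹, 0], [0, Ŝ⁻¹]] · [[D, E], [0, Ŝ]]. Then B⁻¹ C = [[I_p, D⁻¹ E (I - Ŝ⁻¹ S)], [0, Ŝ⁻¹ S]], where S = G - F D⁻¹ E. -/
/-!
Multiplying out the factors, `B = [[D, E], [F, F D⁻¹ E + Ŝ]]`: it agrees with `C` except in the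
(2,2) block, and its Schur complement with respect to `D` is exactly `Ŝ`, so `det B = det D * det Ŝ`
and `B` is invertible. The claim `B⁻¹ C = M` then reduces to the block identity `B M = C`.
-/

open Matrix

namespace Matrix

variable {m n R : Type*} [Fintype m] [Fintype n] [DecidableEq m] [DecidableEq n] [CommRing R]
  {D : Matrix m m R} {E : Matrix m n R} {F : Matrix n m R} {G Shat : Matrix n n R}

theorem fromBlocks_ldu_eq (hD : IsUnit D.det) (hShat : IsUnit Shat.det) :
    fromBlocks D 0 F Shat * fromBlocks D⁻¹ 0 0 Shat⁻¹ * fromBlocks D E 0 Shat =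
      fromBlocks D E F (F * D⁻¹ * E + Shat) := by
  simp [fromBlocks_multiply, mul_nonsing_inv _ hD, mul_nonsing_inv _ hShat,
    nonsing_inv_mul _ hD, Matrix.mul_assoc]

theorem isUnit_det_fromBlocks_schur_add (hD : IsUnit D.det) (hShat : IsUnit Shat.det) :
    IsUnit (fromBlocks D E F (F * D⁻¹ * E + Shat)).det := by
  have := D.invertibleOfIsUnitDet hD
  rwa [det_fromBlocks₁₁, invOf_eq_nonsing_inv, add_sub_cancel_left, IsUnit.mul_iff,
    and_iff_right hD]

theorem fromBlocks_schur_add_mul_eq (hD : IsUnit D.det) (hShat : IsUnit Shat.det) :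
    fromBlocks D E F (F * D⁻¹ * E + Shat) *
        fromBlocks 1 (D⁻¹ * E * (1 - Shat⁻¹ * (G - F * D⁻¹ * E))) 0
          (Shat⁻¹ * (G - F * D⁻¹ * E)) =
      fromBlocks D E F G := by
  simp only [fromBlocks_multiply, Matrix.add_mul, Matrix.mul_sub, ← Matrix.mul_assoc,
    mul_nonsing_inv _ hD, mul_nonsing_inv _ hShat, Matrix.mul_one, Matrix.one_mul,
    Matrix.mul_zero, add_zero]
  congr 1 <;> abel

end Matrix

theorem mscn_left_preconditioned {p q : ℕ}
    (D : Matrix (Fin p) (Fin p) ℝ) (E : Matrix (Fin p) (Fin q) ℝ)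
    (F : Matrix (Fin q) (Fin p) ℝ) (G : Matrix (Fin q) (Fin q) ℝ)
    (Shat : Matrix (Fin q) (Fin q) ℝ)
    (hD : IsUnit D.det) (hShat : IsUnit Shat.det)
    (C : Matrix (Fin p ⊕ Fin q) (Fin p ⊕ Fin q) ℝ) (hC : C = fromBlocks D E F G)
    (B : Matrix (Fin p ⊕ Fin q) (Fin p ⊕ Fin q) ℝ)
    (hB : B = fromBlocks D 0 F Shat * fromBlocks D⁻¹ 0 0 Shat⁻¹ * fromBlocks D E 0 Shat)
    (S : Matrix (Fin q) (Fin q) ℝ) (hSdef : S = G - F * D⁻¹ * E) :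
    B⁻¹ * C = fromBlocks 1 (D⁻¹ * E * (1 - Shat⁻¹ * S)) 0 (Shat⁻¹ * S) := by
  subst hC hB hSdef
  rw [fromBlocks_ldu_eq hD hShat]
  have := invertibleOfIsUnitDet _ (isUnit_det_fromBlocks_schur_add (E := E) (F := F) hD hShat)
  rw [inv_mul_eq_iff_eq_mul_of_invertible]
  exact (fromBlocks_schur_add_mul_eq hD hShat).symm
end

section
/- With the same setup, the right-preconditioned matrix satisfies C B⁻¹ = [[I_p, 0], [(I - S Ŝ⁻¹) F D⁻¹, S Ŝ⁻¹]], where S = G - F D⁻¹ E. -/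
/-!
Multiplying out the three factors gives `B = [[D, E], [F, F D⁻¹ E + Ŝ]]`, which differs from
`C = [[D, E], [F, F D⁻¹ E + S]]` only in the Schur complement of its `(1,1)` block. Hence the
claimed matrix `X` is checked by verifying `X * B = C` block by block, and `B` is invertible
because `det B = det D * det Ŝ`.
-/

open Matrix

namespace Matrix

variable {m n R : Type*} [Fintype m] [Fintype n] [DecidableEq m] [DecidableEq n] [CommRing R]

theorem fromBlocks_lower_mul_inv_mul_upper (D : Matrix m m R) (E : Matrix m n R)
    (F : Matrix n m R) (Shat : Matrix n n R) (hD : IsUnit D.det) (hShat : IsUnit Shat.det) :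
    fromBlocks D 0 F Shat * fromBlocks D⁻¹ 0 0 Shat⁻¹ * fromBlocks D E 0 Shat =
      fromBlocks D E F (F * D⁻¹ * E + Shat) := by
  simp only [fromBlocks_multiply, Matrix.mul_zero, Matrix.zero_mul, add_zero, zero_add,
    mul_nonsing_inv _ hD, mul_nonsing_inv _ hShat, Matrix.one_mul, Matrix.mul_one,
    Matrix.mul_assoc F, nonsing_inv_mul _ hD]

theorem det_fromBlocks_add_schur (D : Matrix m m R) (E : Matrix m n R) (F : Matrix n m R)
    (Shat : Matrix n n R) (hD : IsUnit D.det) :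
    (fromBlocks D E F (F * D⁻¹ * E + Shat)).det = D.det * Shat.det := by
  let := D.invertibleOfIsUnitDet hD
  rw [det_fromBlocks₁₁, invOf_eq_nonsing_inv, add_sub_cancel_left]

theorem fromBlocks_right_preconditioner_mul (D : Matrix m m R) (E : Matrix m n R)
    (F : Matrix n m R) (S Shat : Matrix n n R) (hD : IsUnit D.det) (hShat : IsUnit Shat.det) :
    fromBlocks 1 0 ((1 - S * Shat⁻¹) * F * D⁻¹) (S * Shat⁻¹) *
        fromBlocks D E F (F * D⁻¹ * E + Shat) =
      fromBlocks D E F (F * D⁻¹ * E + S) := by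
  have hF : (1 - S * Shat⁻¹) * F * D⁻¹ * D + S * Shat⁻¹ * F = F := by
    rw [Matrix.mul_assoc _ D⁻¹, nonsing_inv_mul _ hD, Matrix.mul_one, Matrix.sub_mul,
      Matrix.one_mul, Matrix.mul_assoc S, sub_add_cancel]
  have hG : (1 - S * Shat⁻¹) * F * D⁻¹ * E + S * Shat⁻¹ * (F * D⁻¹ * E + Shat) =
      F * D⁻¹ * E + S := by
    rw [Matrix.mul_add, Matrix.mul_assoc S Shat⁻¹ Shat, nonsing_inv_mul _ hShat,
      Matrix.mul_one, Matrix.sub_mul, Matrix.sub_mul, Matrix.sub_mul, Matrix.one_mul]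
    simp only [Matrix.mul_assoc]
    abel
  simp only [fromBlocks_multiply, Matrix.one_mul, Matrix.zero_mul, add_zero, hF, hG]

end Matrix

theorem mscn_right_preconditioned {p q : ℕ}
    (D : Matrix (Fin p) (Fin p) ℝ) (E : Matrix (Fin p) (Fin q) ℝ)
    (F : Matrix (Fin q) (Fin p) ℝ) (G : Matrix (Fin q) (Fin q) ℝ)
    (Shat : Matrix (Fin q) (Fin q) ℝ)
    (hD : IsUnit D.det) (hShat : IsUnit Shat.det)
    (C : Matrix (Fin p ⊕ Fin q) (Fin p ⊕ Fin q) ℝ) (hC : C = fromBlocks D E F G)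
    (B : Matrix (Fin p ⊕ Fin q) (Fin p ⊕ Fin q) ℝ)
    (hB : B = fromBlocks D 0 F Shat * fromBlocks D⁻¹ 0 0 Shat⁻¹ * fromBlocks D E 0 Shat)
    (S : Matrix (Fin q) (Fin q) ℝ) (hSdef : S = G - F * D⁻¹ * E) :
    C * B⁻¹ = fromBlocks 1 0 ((1 - S * Shat⁻¹) * F * D⁻¹) (S * Shat⁻¹) := by
  rw [fromBlocks_lower_mul_inv_mul_upper D E F Shat hD hShat] at hB
  have hBdet : IsUnit B.det := by
    rw [hB, det_fromBlocks_add_schur D E F Shat hD]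
    exact hD.mul hShat
  have hCB : C = fromBlocks 1 0 ((1 - S * Shat⁻¹) * F * D⁻¹) (S * Shat⁻¹) * B := by
    rw [hB, fromBlocks_right_preconditioner_mul D E F S Shat hD hShat, hC, hSdef,
      add_sub_cancel]
  rw [hCB, mul_nonsing_inv_cancel_right _ _ hBdet]
end

section
/- Let C = [[D, E], [F, G]] with D invertible p×p, Ŝ invertible, S = G - F D⁻¹ E, and B the block LDU preconditioner built from D and Ŝ. Then the characteristic polynomial of B⁻¹C equals (x - 1)^p times the characteristic polynomial of Ŝ⁻¹ S. In particular, the eigenvalues of B⁻¹C are 1 (with multiplicity at least p) together with the eigenvalues of Ŝ⁻¹ S. -/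
/-!
`C` and the preconditioner `B` have block LU factorizations with the same lower factor
`[[1, 0], [F D⁻¹, 1]]`; their upper factors `[[D, E], [0, S]]` and `[[D, E], [0, Ŝ]]` differ only in
the Schur-complement block. Hence `B⁻¹ C` is the block upper triangular matrix
`[[1, *], [0, Ŝ⁻¹ S]]`, whose characteristic polynomial is `(X - 1)^p · χ(Ŝ⁻¹ S)`.
-/

open Matrix Polynomial

namespace Matrix

variable {R : Type*} [CommRing R] {m n : Type*} [Fintype m] [Fintype n] [DecidableEq m]
  [DecidableEq n]

theorem fromBlocks_add_schur_eq_mul (D : Matrix m m R) (E : Matrix m n R) (F : Matrix n m R)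
    (T : Matrix n n R) (hD : IsUnit D.det) :
    fromBlocks D E F (T + F * D⁻¹ * E) = fromBlocks 1 0 (F * D⁻¹) 1 * fromBlocks D E 0 T := by
  have hFD : F * D⁻¹ * D = F := by rw [Matrix.mul_assoc, nonsing_inv_mul D hD, Matrix.mul_one]
  simp only [fromBlocks_multiply, Matrix.one_mul, Matrix.zero_mul, Matrix.mul_zero,
    add_zero, hFD, add_comm T]

theorem fromBlocks_zero₁₂_mul_fromBlocks_inv (D : Matrix m m R) (F : Matrix n m R)
    (T : Matrix n n R) (hT : IsUnit T.det) :
    fromBlocks D 0 F T * fromBlocks D⁻¹ 0 0 T⁻¹ = fromBlocks (D * D⁻¹) 0 (F * D⁻¹) 1 := by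
  simp only [fromBlocks_multiply, Matrix.zero_mul, Matrix.mul_zero, add_zero, zero_add,
    mul_nonsing_inv T hT]

theorem inv_fromBlocks_unitriangular_mul_cancel (L : Matrix n m R)
    (A B : Matrix (m ⊕ n) (m ⊕ n) R) :
    (fromBlocks 1 0 L 1 * A)⁻¹ * (fromBlocks 1 0 L 1 * B) = A⁻¹ * B := by
  have hL : IsUnit (fromBlocks (1 : Matrix m m R) 0 L 1).det := by simp
  rw [mul_inv_rev, Matrix.mul_assoc, ← Matrix.mul_assoc _⁻¹ (fromBlocks 1 0 L 1), nonsing_inv_mul _ hL,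
    Matrix.one_mul]

theorem inv_fromBlocks_zero₂₁_mul_fromBlocks_zero₂₁ (D : Matrix m m R) (E : Matrix m n R)
    (T₁ T₂ : Matrix n n R) (hD : IsUnit D.det) (hT₁ : IsUnit T₁.det) :
    (fromBlocks D E 0 T₁)⁻¹ * fromBlocks D E 0 T₂ =
      fromBlocks 1 (D⁻¹ * E * (1 - T₁⁻¹ * T₂)) 0 (T₁⁻¹ * T₂) := by
  rw [inv_fromBlocks_zero₂₁_of_isUnit_iff _ _ _
    (iff_of_true ((isUnit_iff_isUnit_det D).mpr hD) ((isUnit_iff_isUnit_det T₁).mpr hT₁))]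
  simp only [fromBlocks_multiply, Matrix.zero_mul, Matrix.mul_zero, add_zero, zero_add,
    nonsing_inv_mul D hD, Matrix.mul_sub, Matrix.mul_one, Matrix.neg_mul, Matrix.mul_assoc]
  abel_nf

end Matrix

theorem mscn_charpoly {p q : ℕ}
    (D : Matrix (Fin p) (Fin p) ℂ) (E : Matrix (Fin p) (Fin q) ℂ)
    (F : Matrix (Fin q) (Fin p) ℂ) (G : Matrix (Fin q) (Fin q) ℂ)
    (Shat : Matrix (Fin q) (Fin q) ℂ)
    (hD : IsUnit D.det) (hShat : IsUnit Shat.det)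
    (C : Matrix (Fin p ⊕ Fin q) (Fin p ⊕ Fin q) ℂ) (hC : C = fromBlocks D E F G)
    (B : Matrix (Fin p ⊕ Fin q) (Fin p ⊕ Fin q) ℂ)
    (hB : B = fromBlocks D 0 F Shat * fromBlocks D⁻¹ 0 0 Shat⁻¹ * fromBlocks D E 0 Shat)
    (S : Matrix (Fin q) (Fin q) ℂ) (hSdef : S = G - F * D⁻¹ * E) :
    (B⁻¹ * C).charpoly = (X - 1) ^ p * (Shat⁻¹ * S).charpoly := by
  have hB' : B = fromBlocks 1 0 (F * D⁻¹) 1 * fromBlocks D E 0 Shat := by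
    rw [hB, fromBlocks_zero₁₂_mul_fromBlocks_inv D F Shat hShat, mul_nonsing_inv D hD]
  have hC' : C = fromBlocks 1 0 (F * D⁻¹) 1 * fromBlocks D E 0 S := by
    rw [hC, ← fromBlocks_add_schur_eq_mul D E F S hD, hSdef, sub_add_cancel]
  rw [hB', hC', inv_fromBlocks_unitriangular_mul_cancel,
    inv_fromBlocks_zero₂₁_mul_fromBlocks_zero₂₁ D E Shat S hD hShat,
    charpoly_fromBlocks_zero₂₁, charpoly_one, Fintype.card_fin]
end
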